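/- Let f_1, …, f_d : ℝ^{n×p} → ℝ be differentiable, let β > 0, and for each i define H_i(X) = G_i(X) + β·X(XᵀX − I_p), where G_i(X) = ∇f_i(X)((3/2)I_p − (1/2)XᵀX) − X·sym(Xᵀ∇f_i(X)). Let X_1, …, X_d ∈ ℝ^{n×p}, set X̄ = (1/d)Σ_{i=1}^d X_i, and suppose each H_i satisfies ‖H_i(X̄) − H_i(X_i)‖_F ≤ L̂·‖X̄ − X_i‖_F for a constant L̂ > 0. Then ‖(1/d)Σ_{i=1}^d H_i(X̄)‖_F² + (1/d)Σ_{i=1}^d ‖X_i − X̄‖_F² ≤ 2(L̂² + 1)·( ‖(1/d)Σ_{i=1}^d H_i(X_i)‖_F² + (1/d)Σ_{i=1}^d ‖X_i − X̄‖_F² ). -/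

import Mathlib

/-! Write the average of the `Hᵢ(X̄)` as the average of the `Hᵢ(Xᵢ)` plus the average of the
errors `Hᵢ(X̄) - Hᵢ(Xᵢ)`. By the triangle inequality and Cauchy–Schwarz, the squared norm of
the error average is at most the mean squared error, hence at most `L̂²` times the mean of
`‖Xᵢ - X̄‖²`; then `(x + y)² ≤ 2x² + 2y²` gives the bound. -/

open Matrix BigOperators Finset Kronecker

/- Equip matrix spaces with the Frobenius norm (finite-dimensional, so the resulting calculus
notions such as `fderiv`/`Differentiable` are norm-independent). -/
attribute [local instance] Matrix.frobeniusNormedAddCommGroup Matrix.frobeniusNormedSpace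

/-- The Frobenius norm of a real matrix. -/
noncomputable def frob {m k : Type*} [Fintype m] [Fintype k] (A : Matrix m k ℝ) : ℝ :=
  Real.sqrt (∑ i, ∑ j, (A i j) ^ 2)

/-- The trace inner product ⟨A, B⟩ = tr(AᵀB) of real matrices. -/
noncomputable def minner {m k : Type*} [Fintype m] [Fintype k] (A B : Matrix m k ℝ) : ℝ :=
  (Aᵀ * B).trace

/-- The symmetric part sym(B) = (B + Bᵀ)/2 of a square matrix. -/
noncomputable def symPart {k : Type*} (B : Matrix k k ℝ) : Matrix k k ℝ :=
  (1 / 2 : ℝ) • (B + Bᵀ)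

/-- The generalized Riemannian gradient G(X) = ∇f(X)((3/2)I - (1/2)XᵀX) - X·sym(Xᵀ∇f(X)),
expressed in terms of the Euclidean gradient matrix `Gf = ∇f(X)`. -/
noncomputable def Gdir {n p : ℕ} (Gf X : Matrix (Fin n) (Fin p) ℝ) :
    Matrix (Fin n) (Fin p) ℝ :=
  Gf * ((3 / 2 : ℝ) • (1 : Matrix (Fin p) (Fin p) ℝ) - (1 / 2 : ℝ) • (Xᵀ * X))
    - X * symPart (Xᵀ * Gf)

/-- The feasibility direction E(X) = X(XᵀX - I). -/
noncomputable def Edir {n p : ℕ} (X : Matrix (Fin n) (Fin p) ℝ) :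
    Matrix (Fin n) (Fin p) ℝ :=
  X * (Xᵀ * X - 1)

/-- The spectral norm (largest singular value) of a real matrix, as the operator norm of the
associated Euclidean linear map. -/
noncomputable def specNorm {m k : Type*} [Fintype m] [Fintype k] [DecidableEq k]
    (A : Matrix m k ℝ) : ℝ :=
  ‖LinearMap.toContinuousLinearMap (Matrix.toEuclideanLin A)‖

/-- The smallest singular value of a real matrix: the square root of the smallest eigenvalue
of AᵀA (= AᴴA over ℝ). -/
noncomputable def sigmaMin {m k : Type*} [Fintype m] [Fintype k] [DecidableEq m] [DecidableEq k]
    (A : Matrix m k ℝ) : ℝ :=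
  Real.sqrt (⨅ i, (Matrix.isHermitian_conjTranspose_mul_self A).eigenvalues i)

section Averaging

variable {ι E : Type*} [SeminormedAddCommGroup E] [NormedSpace ℝ E]

theorem norm_average_sq_le_average_norm_sq (s : Finset ι) (v : ι → E) :
    ‖(#s : ℝ)⁻¹ • ∑ i ∈ s, v i‖ ^ 2 ≤ (#s : ℝ)⁻¹ * ∑ i ∈ s, ‖v i‖ ^ 2 := by
  rcases s.eq_empty_or_nonempty with rfl | hs
  · simp
  have hcard : (0 : ℝ) < #s := by exact_mod_cast hs.card_pos
  calc ‖(#s : ℝ)⁻¹ • ∑ i ∈ s, v i‖ ^ 2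
      ≤ ((#s : ℝ)⁻¹ * ∑ i ∈ s, ‖v i‖) ^ 2 := by
        rw [norm_smul, norm_inv, Real.norm_natCast]
        gcongr
        exact norm_sum_le _ _
    _ ≤ (#s : ℝ)⁻¹ ^ 2 * (#s * ∑ i ∈ s, ‖v i‖ ^ 2) := by
        rw [mul_pow]
        gcongr
        exact sq_sum_le_card_mul_sum_sq
    _ = (#s : ℝ)⁻¹ * ∑ i ∈ s, ‖v i‖ ^ 2 := by
        field_simp

theorem norm_average_sq_add_le_of_norm_sub_le (s : Finset ι) (a b : ι → E) (r : ι → ℝ) (L : ℝ)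
    (hab : ∀ i ∈ s, ‖a i - b i‖ ≤ L * r i) :
    ‖(#s : ℝ)⁻¹ • ∑ i ∈ s, a i‖ ^ 2 + (#s : ℝ)⁻¹ * ∑ i ∈ s, r i ^ 2
      ≤ 2 * (L ^ 2 + 1)
          * (‖(#s : ℝ)⁻¹ • ∑ i ∈ s, b i‖ ^ 2 + (#s : ℝ)⁻¹ * ∑ i ∈ s, r i ^ 2) := by
  set S := (#s : ℝ)⁻¹ * ∑ i ∈ s, r i ^ 2
  have hS : 0 ≤ S := by positivity
  have hsplit : (#s : ℝ)⁻¹ • ∑ i ∈ s, a i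
      = (#s : ℝ)⁻¹ • ∑ i ∈ s, b i + (#s : ℝ)⁻¹ • ∑ i ∈ s, (a i - b i) := by
    rw [← smul_add, ← Finset.sum_add_distrib]
    simp
  have herr : ‖(#s : ℝ)⁻¹ • ∑ i ∈ s, (a i - b i)‖ ^ 2 ≤ L ^ 2 * S := by
    calc ‖(#s : ℝ)⁻¹ • ∑ i ∈ s, (a i - b i)‖ ^ 2
        ≤ (#s : ℝ)⁻¹ * ∑ i ∈ s, ‖a i - b i‖ ^ 2 := norm_average_sq_le_average_norm_sq s _
      _ ≤ (#s : ℝ)⁻¹ * ∑ i ∈ s, L ^ 2 * r i ^ 2 := by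
        gcongr with i hi
        rw [← mul_pow]
        exact pow_le_pow_left₀ (norm_nonneg _) (hab i hi) 2
      _ = L ^ 2 * S := by
        rw [← Finset.mul_sum]
        ring
  have hmain : ‖(#s : ℝ)⁻¹ • ∑ i ∈ s, a i‖ ^ 2
      ≤ 2 * ‖(#s : ℝ)⁻¹ • ∑ i ∈ s, b i‖ ^ 2 + 2 * (L ^ 2 * S) := by
    rw [hsplit]
    calc _ ≤ (‖(#s : ℝ)⁻¹ • ∑ i ∈ s, b i‖ + ‖(#s : ℝ)⁻¹ • ∑ i ∈ s, (a i - b i)‖) ^ 2 := by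
          gcongr
          exact norm_add_le _ _
      _ ≤ _ := by
          nlinarith [sq_nonneg (‖(#s : ℝ)⁻¹ • ∑ i ∈ s, b i‖
            - ‖(#s : ℝ)⁻¹ • ∑ i ∈ s, (a i - b i)‖)]
  nlinarith [sq_nonneg L, sq_nonneg ‖(#s : ℝ)⁻¹ • ∑ i ∈ s, b i‖,
    mul_nonneg (sq_nonneg L) (sq_nonneg ‖(#s : ℝ)⁻¹ • ∑ i ∈ s, b i‖)]

end Averaging

theorem frob_eq_norm {m k : Type*} [Fintype m] [Fintype k] (A : Matrix m k ℝ) : frob A = ‖A‖ := by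
  simp only [Matrix.frobenius_norm_def, frob, Real.sqrt_eq_rpow, Real.norm_eq_abs, Real.rpow_two,
    sq_abs]

theorem stmt18_general {n p d : ℕ}
    (H : Fin d → Matrix (Fin n) (Fin p) ℝ → Matrix (Fin n) (Fin p) ℝ)
    (X : Fin d → Matrix (Fin n) (Fin p) ℝ)
    (Xbar : Matrix (Fin n) (Fin p) ℝ)
    (Lhat : ℝ)
    (hLip : ∀ i, frob (H i Xbar - H i (X i)) ≤ Lhat * frob (Xbar - X i)) :
    frob ((d : ℝ)⁻¹ • ∑ i, H i Xbar) ^ 2 + (d : ℝ)⁻¹ * ∑ i, frob (X i - Xbar) ^ 2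
      ≤ 2 * (Lhat ^ 2 + 1)
          * (frob ((d : ℝ)⁻¹ • ∑ i, H i (X i)) ^ 2
              + (d : ℝ)⁻¹ * ∑ i, frob (X i - Xbar) ^ 2) := by
  simp only [frob_eq_norm] at hLip ⊢
  have hdist : ∀ i ∈ (univ : Finset (Fin d)),
      ‖H i Xbar - H i (X i)‖ ≤ Lhat * ‖X i - Xbar‖ := fun i _ => norm_sub_rev Xbar (X i) ▸ hLip i
  simpa using norm_average_sq_add_le_of_norm_sub_le univ (fun i => H i Xbar) (fun i => H i (X i))
    (fun i => ‖X i - Xbar‖) Lhat hdist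

/-- Transfer of the tracked-direction bound to the averaged iterate. With
`Hᵢ(X) = Gᵢ(X) + βE(X)`, `X̄ = (1/d)Σᵢ Xᵢ`, and `‖Hᵢ(X̄) - Hᵢ(Xᵢ)‖_F ≤ L̂‖X̄ - Xᵢ‖_F`,
`‖(1/d)Σᵢ Hᵢ(X̄)‖_F² + (1/d)Σᵢ ‖Xᵢ - X̄‖_F²
  ≤ 2(L̂² + 1)(‖(1/d)Σᵢ Hᵢ(Xᵢ)‖_F² + (1/d)Σᵢ ‖Xᵢ - X̄‖_F²)`. -/
theorem stmt18 {n p d : ℕ} (hd : 0 < d)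
    (f : Fin d → Matrix (Fin n) (Fin p) ℝ → ℝ) (hf : ∀ i, Differentiable ℝ (f i))
    (gradf : Fin d → Matrix (Fin n) (Fin p) ℝ → Matrix (Fin n) (Fin p) ℝ)
    (hgrad : ∀ i X V, fderiv ℝ (f i) X V = minner (gradf i X) V)
    (β : ℝ) (hβ : 0 < β)
    (H : Fin d → Matrix (Fin n) (Fin p) ℝ → Matrix (Fin n) (Fin p) ℝ)
    (hH : ∀ i X, H i X = Gdir (gradf i X) X + β • Edir X)
    (X : Fin d → Matrix (Fin n) (Fin p) ℝ)
    (Xbar : Matrix (Fin n) (Fin p) ℝ) (hXbar : Xbar = (d : ℝ)⁻¹ • ∑ i, X i)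
    (Lhat : ℝ) (hLhat : 0 < Lhat)
    (hLip : ∀ i, frob (H i Xbar - H i (X i)) ≤ Lhat * frob (Xbar - X i)) :
    frob ((d : ℝ)⁻¹ • ∑ i, H i Xbar) ^ 2 + (d : ℝ)⁻¹ * ∑ i, frob (X i - Xbar) ^ 2
      ≤ 2 * (Lhat ^ 2 + 1)
          * (frob ((d : ℝ)⁻¹ • ∑ i, H i (X i)) ^ 2
              + (d : ℝ)⁻¹ * ∑ i, frob (X i - Xbar) ^ 2) :=
  stmt18_general H X Xbar Lhat hLip
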